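/- Fix ζ ∈ ℂ with |ζ| < 1, let b_ζ(t) = (t − ζ)/(1 − conj(ζ)·t), let k be a natural number, and let f be complex-analytic on a neighborhood of the closed unit disk. Then ∫_𝕋 f(t)/b_ζ(t)^k · (1 − |ζ|²)/|t − ζ|² L(dt) = (1/k!) · ((D_{b_ζ})^k f)(ζ), where L is the normalized Lebesgue (arclength) measure on the unit circle 𝕋, D_{b_ζ} is the operator (D_{b_ζ} u)(t) = u'(t)/b_ζ'(t), and (D_{b_ζ})^k is its k-fold iterate. -/

import Mathlib

open Complex Metric

/-- The Blaschke factor with zero at `ζ`. -/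
noncomputable def blaschke (ζ : ℂ) : ℂ → ℂ := fun t => (t - ζ) / (1 - (starRingEnd ℂ) ζ * t)

/-- The weighted differentiation operator `D_g`: `(D_g u)(t) = u'(t) / g'(t)`. -/
noncomputable def Dg (g u : ℂ → ℂ) : ℂ → ℂ := fun t => deriv u t / deriv g t

/-!
On the unit circle the Poisson kernel equals `t · b_ζ'(t) / b_ζ(t)`, so the left-hand side is
`(2πi)⁻¹ ∮ f / b_ζ^k · b_ζ' / b_ζ dz`. Since `(u / gⁿ)'` integrates to zero over the circle,
`∮ u / g^(k+1) · g'/g = (k+1)⁻¹ ∮ D_g u / g^k · g'/g` for any `g` with `g' ≠ 0`; iterating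
reduces the power to zero. Finally `b_ζ'/b_ζ = (1 - |ζ|²) / ((1 - ζ̄z)(z - ζ))` has a simple
pole at `ζ` with residue `1`, so the Cauchy integral formula gives `∮ v · b_ζ'/b_ζ = 2πi v(ζ)`.
-/

open ComplexConjugate Real

section CircleIntegral

variable {U : Set ℂ} {g u : ℂ → ℂ} {c : ℂ} {R : ℝ}

theorem analyticOnNhd_Dg (hu : AnalyticOnNhd ℂ u U) (hg : AnalyticOnNhd ℂ g U)
    (hg' : ∀ z ∈ U, deriv g z ≠ 0) : AnalyticOnNhd ℂ (Dg g u) U :=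
  fun z hz => (hu.deriv z hz).div (hg.deriv z hz) (hg' z hz)

theorem analyticOnNhd_iterate_Dg (hu : AnalyticOnNhd ℂ u U) (hg : AnalyticOnNhd ℂ g U)
    (hg' : ∀ z ∈ U, deriv g z ≠ 0) (k : ℕ) : AnalyticOnNhd ℂ ((Dg g)^[k] u) U := by
  induction k generalizing u with
  | zero => exact hu
  | succ k ih => exact ih (analyticOnNhd_Dg hu hg hg')

/-- Integration by parts: `(u / gⁿ)'` integrates to zero over a closed circle. -/
theorem circleIntegral_deriv_div_pow (hR : 0 ≤ R) (hu : AnalyticOnNhd ℂ u U)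
    (hg : AnalyticOnNhd ℂ g U) (hsub : sphere c R ⊆ U) (hg0 : ∀ z ∈ sphere c R, g z ≠ 0)
    (n : ℕ) :
    (∮ z in C(c, R), deriv u z / g z ^ n)
      = n * ∮ z in C(c, R), u z / g z ^ n * logDeriv g z := by
  have hderiv : ∀ z ∈ sphere c R, HasDerivAt (fun w => u w / g w ^ n)
      (deriv u z / g z ^ n - n * (u z / g z ^ n * logDeriv g z)) z := by
    intro z hz
    have hgz := hg0 z hz
    refine (((hu z (hsub hz)).differentiableAt.hasDerivAt).div
      (((hg z (hsub hz)).differentiableAt.hasDerivAt).fun_pow n)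
      (pow_ne_zero n hgz)).congr_deriv ?_
    rw [logDeriv_apply]
    rcases n with _ | n
    · simp
    · push_cast
      field_simp
      ring
  have hcont : ∀ {v : ℂ → ℂ}, AnalyticOnNhd ℂ v U →
      ContinuousOn (fun z => v z / g z ^ n) (sphere c R) := fun hv =>
    (hv.continuousOn.mono hsub).div ((hg.continuousOn.mono hsub).pow n)
      fun z hz => pow_ne_zero n (hg0 z hz)
  have hlog : ContinuousOn (logDeriv g) (sphere c R) :=
    (hg.deriv.continuousOn.mono hsub).div (hg.continuousOn.mono hsub) hg0
  have hzero := circleIntegral.integral_eq_zero_of_hasDerivWithinAt hR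
    fun z hz => (hderiv z hz).hasDerivWithinAt
  rw [circleIntegral.integral_sub ((hcont hu.deriv).circleIntegrable hR)
    ((continuousOn_const.fun_mul ((hcont hu).fun_mul hlog)).circleIntegrable hR),
    circleIntegral.integral_const_mul] at hzero
  exact sub_eq_zero.mp hzero

theorem circleIntegral_div_pow_mul_logDeriv (hR : 0 ≤ R) (hu : AnalyticOnNhd ℂ u U)
    (hg : AnalyticOnNhd ℂ g U) (hg' : ∀ z ∈ U, deriv g z ≠ 0) (hsub : sphere c R ⊆ U)
    (hg0 : ∀ z ∈ sphere c R, g z ≠ 0) (k : ℕ) :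
    (∮ z in C(c, R), u z / g z ^ k * logDeriv g z)
      = (k.factorial : ℂ)⁻¹ * ∮ z in C(c, R), (Dg g)^[k] u z * logDeriv g z := by
  induction k generalizing u with
  | zero => simp
  | succ k ih =>
    have hDg : (∮ z in C(c, R), deriv u z / g z ^ (k + 1))
        = ∮ z in C(c, R), Dg g u z / g z ^ k * logDeriv g z :=
      circleIntegral.integral_congr hR fun z hz => by
        have hgz := hg0 z hz
        have hg'z := hg' z (hsub hz)
        simp only [Dg, logDeriv_apply]
        field_simp
        ring
    have hparts := circleIntegral_deriv_div_pow hR hu hg hsub hg0 (k + 1)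
    rw [hDg, ih (analyticOnNhd_Dg hu hg hg')] at hparts
    rw [Function.iterate_succ_apply, Nat.factorial_succ, Nat.cast_mul, mul_inv, mul_assoc, hparts,
      inv_mul_cancel_left₀ (Nat.cast_ne_zero.mpr k.succ_ne_zero)]

end CircleIntegral

section Blaschke

variable {ζ z : ℂ}

theorem one_sub_conj_mul_ne_zero (hζ : ‖ζ‖ < 1) (hz : ‖z‖ ≤ 1) : 1 - conj ζ * z ≠ 0 := by
  refine sub_ne_zero.mpr fun h => ?_
  have : ‖conj ζ * z‖ < 1 := by
    rw [norm_mul, RCLike.norm_conj]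
    nlinarith [norm_nonneg ζ, norm_nonneg z]
  rw [← h, norm_one] at this
  exact lt_irrefl _ this

theorem ne_of_mem_sphere_of_norm_lt (hζ : ‖ζ‖ < 1) (hz : z ∈ sphere (0 : ℂ) 1) : z ≠ ζ :=
  ne_of_mem_of_not_mem hz fun h => hζ.ne (mem_sphere_zero_iff_norm.mp h)

theorem hasDerivAt_blaschke (h : 1 - conj ζ * z ≠ 0) :
    HasDerivAt (blaschke ζ) ((1 - conj ζ * ζ) / (1 - conj ζ * z) ^ 2) z := by
  have hnum : HasDerivAt (fun w => w - ζ) 1 z := (hasDerivAt_id' z).sub_const ζ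
  have hden : HasDerivAt (fun w => 1 - conj ζ * w) (-conj ζ) z := by
    simpa using ((hasDerivAt_id' z).const_mul (conj ζ)).const_sub 1
  refine (hnum.div hden h).congr_deriv ?_
  field_simp
  ring

theorem analyticAt_blaschke (h : 1 - conj ζ * z ≠ 0) : AnalyticAt ℂ (blaschke ζ) z :=
  (analyticAt_id.sub analyticAt_const).div
    (analyticAt_const.sub (analyticAt_const.mul analyticAt_id)) h

theorem deriv_blaschke_ne_zero (hζ : ‖ζ‖ < 1) (h : 1 - conj ζ * z ≠ 0) :
    deriv (blaschke ζ) z ≠ 0 := by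
  rw [(hasDerivAt_blaschke h).deriv]
  exact div_ne_zero (one_sub_conj_mul_ne_zero hζ hζ.le) (pow_ne_zero 2 h)

theorem logDeriv_blaschke (h : 1 - conj ζ * z ≠ 0) (hz : z ≠ ζ) :
    logDeriv (blaschke ζ) z = (1 - conj ζ * ζ) / ((1 - conj ζ * z) * (z - ζ)) := by
  have hzζ := sub_ne_zero.mpr hz
  rw [logDeriv_apply, (hasDerivAt_blaschke h).deriv, blaschke]
  field_simp

theorem poissonKernel_eq_mul_logDeriv_blaschke {t : ℂ} (ht : ‖t‖ = 1) (hζ : t ≠ ζ) :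
    (((1 - ‖ζ‖ ^ 2) / ‖t - ζ‖ ^ 2 : ℝ) : ℂ) = t * logDeriv (blaschke ζ) t := by
  have ht0 : t ≠ 0 := norm_ne_zero_iff.mp (by simp [ht])
  have htζ := sub_ne_zero.mpr hζ
  have hconj : 1 - conj ζ * t = t * conj (t - ζ) := by
    have : t * conj t = 1 := by rw [mul_conj', ht]; simp
    rw [map_sub, mul_sub, this]
    ring
  have hne : 1 - conj ζ * t ≠ 0 := by
    rw [hconj]
    exact mul_ne_zero ht0 ((map_ne_zero _).mpr htζ)
  rw [logDeriv_blaschke hne hζ, hconj]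
  push_cast
  rw [← mul_conj', ← conj_mul']
  field_simp

theorem circleIntegral_mul_logDeriv_blaschke {v : ℂ → ℂ} (hζ : ‖ζ‖ < 1)
    (hv : DifferentiableOn ℂ v (closedBall 0 1)) :
    (∮ z in C(0, 1), v z * logDeriv (blaschke ζ) z) = 2 * π * I * v ζ := by
  have hne : ∀ z ∈ closedBall (0 : ℂ) 1, 1 - conj ζ * z ≠ 0 := fun z hz =>
    one_sub_conj_mul_ne_zero hζ (mem_closedBall_zero_iff.mp hz)
  have hG : DifferentiableOn ℂ (fun z => (1 - conj ζ * ζ) * v z / (1 - conj ζ * z))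
      (closedBall 0 1) :=
    (hv.const_mul _).div (by fun_prop) hne
  have hζζ := one_sub_conj_mul_ne_zero hζ hζ.le
  calc (∮ z in C(0, 1), v z * logDeriv (blaschke ζ) z)
      = ∮ z in C(0, 1), (z - ζ)⁻¹ • ((1 - conj ζ * ζ) * v z / (1 - conj ζ * z)) := by
        refine circleIntegral.integral_congr zero_le_one fun z hz => ?_
        have hzζ := ne_of_mem_sphere_of_norm_lt hζ hz
        have hz' := hne z (sphere_subset_closedBall hz)
        have hzζ' := sub_ne_zero.mpr hzζ
        rw [logDeriv_blaschke hz' hzζ, smul_eq_mul]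
        field_simp
    _ = 2 * π * I * v ζ := by
        rw [hG.circleIntegral_sub_inv_smul (mem_ball_zero_iff.mpr hζ), smul_eq_mul]
        field_simp

theorem circleAverage_mul_poissonKernel (hζ : ‖ζ‖ < 1) (F : ℂ → ℂ) :
    circleAverage (fun t => F t * (((1 - ‖ζ‖ ^ 2) / ‖t - ζ‖ ^ 2 : ℝ) : ℂ)) 0 1
      = (2 * π * I)⁻¹ * ∮ z in C(0, 1), F z * logDeriv (blaschke ζ) z := by
  rw [circleAverage_eq_circleIntegral one_ne_zero, smul_eq_mul]
  congr 1
  refine circleIntegral.integral_congr zero_le_one fun z hz => ?_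
  have hz1 := mem_sphere_zero_iff_norm.mp hz
  have hz0 : z ≠ 0 := norm_ne_zero_iff.mp (by simp [hz1])
  rw [poissonKernel_eq_mul_logDeriv_blaschke hz1 (ne_of_mem_sphere_of_norm_lt hζ hz), sub_zero,
    smul_eq_mul]
  field_simp

end Blaschke

/-- The paper's main theorem in the case of the unit disk with trivial Fuchsian group:
`∫_𝕋 f(t)/b_ζ(t)^k · (1 − |ζ|²)/|t − ζ|² L(dt) = (1/k!)((D_{b_ζ})^k f)(ζ)`, where `L`
is the normalized Lebesgue measure on the unit circle, parametrized by
`t = exp(iθ)`, `L(dt) = dθ/(2π)`. -/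
theorem direct_cauchy_theorem_disk
    (ζ : ℂ) (hζ : ‖ζ‖ < 1) (k : ℕ) (f : ℂ → ℂ)
    (hf : ∃ U : Set ℂ, IsOpen U ∧ closedBall (0 : ℂ) 1 ⊆ U ∧
      ∀ x ∈ U, AnalyticAt ℂ f x) :
    (1 / (2 * Real.pi) : ℂ) *
        ∫ θ in (0:ℝ)..(2 * Real.pi),
          f (Complex.exp (θ * Complex.I)) / (blaschke ζ (Complex.exp (θ * Complex.I))) ^ k
            * (((1 - ‖ζ‖ ^ 2) / ‖Complex.exp (θ * Complex.I) - ζ‖ ^ 2 : ℝ) : ℂ)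
      = (1 / (k.factorial : ℂ)) * (Dg (blaschke ζ))^[k] f ζ := by
  obtain ⟨U, -, hUsub, hfU⟩ := hf
  set V := U ∩ {z | 1 - conj ζ * z ≠ 0}
  have hballV : closedBall (0 : ℂ) 1 ⊆ V := fun z hz =>
    ⟨hUsub hz, one_sub_conj_mul_ne_zero hζ (mem_closedBall_zero_iff.mp hz)⟩
  have hfV : AnalyticOnNhd ℂ f V := fun z hz => hfU z hz.1
  have hbV : AnalyticOnNhd ℂ (blaschke ζ) V := fun z hz => analyticAt_blaschke hz.2
  have hb'V : ∀ z ∈ V, deriv (blaschke ζ) z ≠ 0 := fun z hz => deriv_blaschke_ne_zero hζ hz.2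
  have hb0 : ∀ z ∈ sphere (0 : ℂ) 1, blaschke ζ z ≠ 0 := fun z hz =>
    div_ne_zero (sub_ne_zero.mpr (ne_of_mem_sphere_of_norm_lt hζ hz))
      (hballV (sphere_subset_closedBall hz)).2
  calc _ = circleAverage (fun t => f t / blaschke ζ t ^ k
          * (((1 - ‖ζ‖ ^ 2) / ‖t - ζ‖ ^ 2 : ℝ) : ℂ)) 0 1 := by
        simp [circleAverage_def, circleMap_zero, Complex.real_smul]
    _ = (2 * π * I)⁻¹ * ∮ z in C(0, 1), f z / blaschke ζ z ^ k * logDeriv (blaschke ζ) z :=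
        circleAverage_mul_poissonKernel hζ _
    _ = (2 * π * I)⁻¹ * ((k.factorial : ℂ)⁻¹ *
          ∮ z in C(0, 1), (Dg (blaschke ζ))^[k] f z * logDeriv (blaschke ζ) z) := by
        rw [circleIntegral_div_pow_mul_logDeriv zero_le_one hfV hbV hb'V
          (sphere_subset_closedBall.trans hballV) hb0]
    _ = _ := by
        rw [circleIntegral_mul_logDeriv_blaschke hζ
          ((analyticOnNhd_iterate_Dg hfV hbV hb'V k).differentiableOn.mono hballV)]
        field_simp
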